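/- Let E be a real separable Banach space and let (μ_n) be a sequence of Gaussian Borel probability measures on E converging weakly to a Borel probability measure μ. Then μ is Gaussian. -/

import Mathlib

open MeasureTheory ProbabilityTheory Filter
open scoped NNReal Topology

/-- A Borel probability measure on a real Banach space is Gaussian if every continuous linear
functional pushes it forward to a (possibly degenerate) Gaussian measure on `ℝ`. -/
def IsGaussianMeasure {E : Type*} [NormedAddCommGroup E] [NormedSpace ℝ E]
    [MeasurableSpace E] (μ : Measure E) : Prop :=
  ∀ f : E →L[ℝ] ℝ, ∃ (m : ℝ) (v : ℝ≥0), μ.map f = gaussianReal m v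

/-!
Fix `f : E →L[ℝ] ℝ`. The laws `N(mₙ, vₙ)` of `f` under `μₙ` converge weakly to the law `ν` of `f`
under `μ`, so it suffices that the Gaussian laws form a closed subset of the probability measures
on `ℝ`. If `ν` lies in their closure, choose `R` with `ν (-R, R) > 1/2`; by the portmanteau theorem
this inequality persists on a neighbourhood of `ν`. A Gaussian `N(m, v)` giving mass `> 1/2` to
`(-R, R)` has `m ∈ [-R, R]`, since it gives mass `≤ 1/2` to each side of `m`, and `v ≤ 8R²/π`,
since its density is at most `1/√(2πv)`. Near `ν` the Gaussian laws are therefore the image of a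
compact set of parameters under the continuous map `(m, v) ↦ N(m, v)`, a closed set.
-/

open Set Real
open scoped ENNReal

theorem exists_lt_measure_Ioo (ν : Measure ℝ) {c : ℝ≥0∞} (hc : c < ν univ) :
    ∃ R : ℝ, c < ν (Ioo (-R) R) := by
  have hmono : Monotone fun R : ℝ => Ioo (-R) R :=
    fun R S hRS => Ioo_subset_Ioo (neg_le_neg hRS) hRS
  have hunion : ⋃ R : ℝ, Ioo (-R) R = univ :=
    eq_univ_of_forall fun x => mem_iUnion.mpr
      ⟨|x| + 1, by constructor <;> cases abs_cases x <;> linarith⟩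
  have hlim := tendsto_measure_iUnion_atTop (μ := ν) hmono
  rw [hunion] at hlim
  exact (hlim.eventually (lt_mem_nhds hc)).exists

theorem MeasureTheory.ProbabilityMeasure.isOpen_setOf_lt_measure {Ω : Type*} [MeasurableSpace Ω]
    [TopologicalSpace Ω] [OpensMeasurableSpace Ω] [HasOuterApproxClosed Ω]
    {G : Set Ω} (hG : IsOpen G) (c : ℝ≥0∞) :
    IsOpen {P : ProbabilityMeasure Ω | c < (P : Measure Ω) G} :=
  isOpen_iff_mem_nhds.mpr fun _ hP => eventually_lt_of_lt_liminf
    (hP.trans_le (le_liminf_measure_open_of_tendsto tendsto_id hG))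

theorem gaussianReal_Ioi_self_eq_Iio_self (m : ℝ) (v : ℝ≥0) :
    gaussianReal m v (Ioi m) = gaussianReal m v (Iio m) := by
  conv_lhs => rw [← show 2 * m - m = m by ring, ← gaussianReal_map_const_sub]
  rw [Measure.map_apply (by fun_prop) measurableSet_Ioi]
  congr 1
  ext x
  simp

theorem gaussianReal_Iio_self_le_half (m : ℝ) (v : ℝ≥0) : gaussianReal m v (Iio m) ≤ 2⁻¹ := by
  have hsum : gaussianReal m v (Iio m) + gaussianReal m v (Ioi m) ≤ 1 := by
    rw [← measure_union ((Iic_disjoint_Ioi le_rfl).mono_left Iio_subset_Iic_self)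
      measurableSet_Ioi]
    exact prob_le_one
  rw [gaussianReal_Ioi_self_eq_Iio_self, ← two_mul] at hsum
  exact ENNReal.le_inv_iff_mul_le.mpr (by rwa [mul_comm])

theorem gaussianReal_Ioi_self_le_half (m : ℝ) (v : ℝ≥0) : gaussianReal m v (Ioi m) ≤ 2⁻¹ :=
  (gaussianReal_Ioi_self_eq_Iio_self m v).trans_le (gaussianReal_Iio_self_le_half m v)

theorem gaussianPDFReal_le (m : ℝ) (v : ℝ≥0) (x : ℝ) :
    gaussianPDFReal m v x ≤ (√(2 * π * v))⁻¹ := by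
  rw [gaussianPDFReal]
  refine mul_le_of_le_one_right (by positivity) (exp_le_one_iff.mpr ?_)
  exact div_nonpos_of_nonpos_of_nonneg (neg_nonpos.mpr (sq_nonneg _)) (by simp)

theorem ofReal_sqrt_mul_gaussianReal_le_volume (m : ℝ) (v : ℝ≥0) (s : Set ℝ) :
    ENNReal.ofReal √(2 * π * v) * gaussianReal m v s ≤ volume s := by
  rcases eq_or_ne v 0 with rfl | hv
  · simp
  calc ENNReal.ofReal √(2 * π * v) * gaussianReal m v s
      ≤ ENNReal.ofReal √(2 * π * v) * ∫⁻ _ in s, ENNReal.ofReal (√(2 * π * v))⁻¹ := by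
        rw [gaussianReal_apply m hv]
        gcongr with x
        exact ENNReal.ofReal_le_ofReal (gaussianPDFReal_le m v x)
    _ = volume s := by
        rw [setLIntegral_const, ← mul_assoc, ← ENNReal.ofReal_mul (by positivity),
          mul_inv_cancel₀ (by simp [hv, pi_nonneg]), ENNReal.ofReal_one, one_mul]

theorem gaussianReal_params_mem_of_half_lt_measure_Ioo {m R : ℝ} {v : ℝ≥0}
    (h : 2⁻¹ < gaussianReal m v (Ioo (-R) R)) :
    (m, v) ∈ Icc (-R) R ×ˢ Icc 0 (8 * R ^ 2 / π).toNNReal := by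
  have hm : m ∈ Icc (-R) R := by
    constructor <;> by_contra! hm
    · exact (h.trans_le ((measure_mono fun x hx => hm.trans hx.1).trans
        (gaussianReal_Ioi_self_le_half m v))).false
    · exact (h.trans_le ((measure_mono fun x hx => hx.2.trans hm).trans
        (gaussianReal_Iio_self_le_half m v))).false
  have hR : 0 ≤ R := by linarith [hm.1, hm.2]
  have hsqrt : √(2 * π * v) * 2⁻¹ ≤ 2 * R := by
    have hvol := (mul_le_mul_right h.le (ENNReal.ofReal √(2 * π * v))).trans
      (ofReal_sqrt_mul_gaussianReal_le_volume m v _)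
    rwa [Real.volume_Ioo, sub_neg_eq_add, ← two_mul, ← ENNReal.ofReal_ofNat 2,
      ← ENNReal.ofReal_inv_of_pos two_pos, ← ENNReal.ofReal_mul (by positivity),
      ENNReal.ofReal_le_ofReal_iff (by positivity)] at hvol
  have hvar : 2 * π * v ≤ (4 * R) ^ 2 := (sqrt_le_iff.mp (by linarith)).2
  refine ⟨hm, bot_le, (le_toNNReal_iff_coe_le (by positivity)).mpr ?_⟩
  rw [le_div_iff₀ pi_pos]
  nlinarith

noncomputable def gaussianProbabilityMeasure (p : ℝ × ℝ≥0) : ProbabilityMeasure ℝ :=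
  ⟨gaussianReal p.1 p.2, inferInstance⟩

theorem gaussianReal_eq_map_stdGaussian (m : ℝ) (v : ℝ≥0) :
    gaussianReal m v = (gaussianReal 0 1).map (fun x => m + √v * x) := by
  have hscale : (gaussianReal 0 1).map (fun x => √v * x) = gaussianReal 0 v := by
    convert gaussianReal_map_const_mul (μ := 0) (v := 1) √v using 2
    · simp
    · ext
      simp
  rw [show (fun x => m + √v * x) = (m + ·) ∘ (√v * ·) from rfl,
    ← Measure.map_map (measurable_const_add m) (measurable_const_mul _), hscale,
    gaussianReal_map_const_add, zero_add]

theorem continuous_gaussianProbabilityMeasure : Continuous gaussianProbabilityMeasure := by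
  refine continuous_iff_continuousAt.mpr fun p =>
    ProbabilityMeasure.tendsto_iff_forall_integral_tendsto.mpr fun g => ?_
  have hstd (q : ℝ × ℝ≥0) :
      ∫ x, g x ∂gaussianReal q.1 q.2 = ∫ x, g (q.1 + √q.2 * x) ∂gaussianReal 0 1 := by
    rw [gaussianReal_eq_map_stdGaussian, integral_map (by fun_prop) (by fun_prop)]
  simp only [gaussianProbabilityMeasure, ProbabilityMeasure.coe_mk]
  rw [funext hstd, hstd]
  refine tendsto_integral_filter_of_dominated_convergence (fun _ => ‖g‖)
    (Eventually.of_forall fun q => by fun_prop)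
    (Eventually.of_forall fun q => ae_of_all _ fun x => g.norm_coe_le_norm _)
    (integrable_const _) (ae_of_all _ fun x => ?_)
  exact (g.continuous.comp (by fun_prop : Continuous fun q : ℝ × ℝ≥0 => q.1 + √q.2 * x)).tendsto p

theorem isClosed_range_gaussianProbabilityMeasure :
    IsClosed (range gaussianProbabilityMeasure) := by
  refine isClosed_of_closure_subset fun P hP => ?_
  obtain ⟨R, hR⟩ := exists_lt_measure_Ioo (P : Measure ℝ) (c := 2⁻¹) (by simp)
  let K := Icc (-R) R ×ˢ Icc 0 (8 * R ^ 2 / π).toNNReal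
  have hK : IsClosed (gaussianProbabilityMeasure '' K) :=
    ((isCompact_Icc.prod isCompact_Icc).image continuous_gaussianProbabilityMeasure).isClosed
  have hsub : {Q : ProbabilityMeasure ℝ | 2⁻¹ < (Q : Measure ℝ) (Ioo (-R) R)} ∩
      range gaussianProbabilityMeasure ⊆ gaussianProbabilityMeasure '' K := by
    rintro _ ⟨hQ, p, rfl⟩
    exact ⟨p, gaussianReal_params_mem_of_half_lt_measure_Ioo hQ, rfl⟩
  exact image_subset_range _ _ (hK.closure_subset_iff.mpr hsub
    ((ProbabilityMeasure.isOpen_setOf_lt_measure isOpen_Ioo _).inter_closure ⟨hR, hP⟩))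

theorem stmt10_general {E : Type*} [NormedAddCommGroup E] [NormedSpace ℝ E]
    [MeasurableSpace E] [BorelSpace E]
    (μn : ℕ → Measure E) [∀ n, IsProbabilityMeasure (μn n)]
    (μ : Measure E) [IsProbabilityMeasure μ]
    (hgauss : ∀ n, IsGaussianMeasure (μn n))
    (hconv : ∀ g : BoundedContinuousFunction E ℝ,
      Tendsto (fun n => ∫ x, g x ∂μn n) atTop (𝓝 (∫ x, g x ∂μ))) :
    IsGaussianMeasure μ := by
  intro f
  let P (n : ℕ) : ProbabilityMeasure E := ⟨μn n, inferInstance⟩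
  have hlim : Tendsto P atTop (𝓝 ⟨μ, inferInstance⟩) :=
    ProbabilityMeasure.tendsto_iff_forall_integral_tendsto.mpr hconv
  have hgauss_f (n : ℕ) :
      (P n).map f.continuous.measurable.aemeasurable ∈ range gaussianProbabilityMeasure := by
    obtain ⟨m, v, h⟩ := hgauss n f
    exact ⟨(m, v), Subtype.ext h.symm⟩
  obtain ⟨⟨m, v⟩, hmv⟩ := isClosed_range_gaussianProbabilityMeasure.mem_of_tendsto
    (((ProbabilityMeasure.continuous_map f.continuous).tendsto _).comp hlim)
    (Eventually.of_forall hgauss_f)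
  exact ⟨m, v, (congrArg Subtype.val hmv).symm⟩

/-- On a real separable Banach space, a weak limit of Gaussian Borel
probability measures is Gaussian. -/
theorem stmt10 {E : Type*} [NormedAddCommGroup E] [NormedSpace ℝ E] [CompleteSpace E]
    [TopologicalSpace.SeparableSpace E] [MeasurableSpace E] [BorelSpace E]
    (μn : ℕ → Measure E) [∀ n, IsProbabilityMeasure (μn n)]
    (μ : Measure E) [IsProbabilityMeasure μ]
    (hgauss : ∀ n, IsGaussianMeasure (μn n))
    (hconv : ∀ g : BoundedContinuousFunction E ℝ,
      Tendsto (fun n => ∫ x, g x ∂μn n) atTop (𝓝 (∫ x, g x ∂μ))) :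
    IsGaussianMeasure μ :=
  stmt10_general μn μ hgauss hconv
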